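/- arXiv:1605.05037 — 2 statements merged into one kernel-verified Lean document; each statement's English description precedes it below -/
import Mathlib

section
/- Let n, m be positive integers and let V₁, V₂, V₃, V₄ be fixed n×m complex matrices (playing the roles of the precoding matrices V_{i-2,i}, V_{i-1,i}, V_{i,i}, V_{i+1,i}). Let μ be a Borel probability measure on ℂ that is absolutely continuous with respect to Lebesgue measure. Suppose that when d, d' ∈ ℂⁿ are drawn with all 2n entries i.i.d. according to μ, the n×m matrix diag(d)·V₃ + diag(d')·V₂ has full column rank m almost surely. Then, when h₁, h₂, h₃, h₄ ∈ ℂⁿ are drawn with all 4n entries i.i.d. according to μ, the n×2m matrix obtained by horizontally concatenating diag(h₁)·V₂ + diag(h₂)·V₁ and diag(h₃)·V₃ + diag(h₄)·V₄ has rank at least m almost surely. -/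
/-!
Fix a realisation `d` of the channels for which the desired-signal matrix `N` has full column
rank `m`, so that `Nᴴ N` is invertible. With `A(h)`, `B(h)` the two interference blocks,
`det (Nᴴ (A(h) + B(h)))` is a polynomial in the `4n` channel coefficients, and it is not the zero
polynomial: at `h = (d₁, 0, d₀, 0)` it equals `det (Nᴴ N)`. The zero set of a nonzero polynomial
is null for any product of atomless measures (Fubini, inducting on the number of variables: for
almost every value of the other variables the leading coefficient in the first one survives, and
then only finitely many values of the first variable are roots). Hence almost surely
`Nᴴ (A + B)` is invertible, and `m ≤ rank (A + B) ≤ rank [A B]`.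
-/

open MeasureTheory Matrix

theorem MeasureTheory.Measure.AbsolutelyContinuous.nullSingletonClass {α : Type*}
    [MeasurableSpace α] {μ ν : Measure α} [NullSingletonClass ν] (h : μ ≪ ν) :
    NullSingletonClass μ :=
  ⟨fun a => h (measure_singleton a)⟩

namespace Polynomial

theorem ae_eval_ne_zero {K : Type*} [CommRing K] [IsDomain K] [MeasurableSpace K]
    (μ : Measure K) [NullSingletonClass μ] {f : K[X]} (hf : f ≠ 0) :
    ∀ᵐ a ∂μ, f.eval a ≠ 0 :=
  measure_eq_zero_iff_ae_notMem.1 ((finite_setOfPred_isRoot hf).measure_zero μ)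

end Polynomial

namespace MvPolynomial

theorem ae_eval_ne_zero_of_fin : ∀ {k : ℕ} (μs : Fin k → Measure ℂ) [∀ i, SigmaFinite (μs i)]
    [∀ i, NullSingletonClass (μs i)] {p : MvPolynomial (Fin k) ℂ}, p ≠ 0 →
    ∀ᵐ x ∂Measure.pi μs, eval x p ≠ 0
  | 0, μs, _, _, p, hp => by
    obtain ⟨c, rfl⟩ := C_surjective (Fin 0) p
    exact ae_of_all _ fun x => by simpa using hp
  | k + 1, μs, _, _, p, hp => by
    set q := finSuccEquiv ℂ k p
    have hq : q ≠ 0 := by simpa [q] using hp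
    have hlead : ∀ᵐ y ∂Measure.pi fun j => μs ((0 : Fin (k + 1)).succAbove j),
        eval y q.leadingCoeff ≠ 0 :=
      ae_eval_ne_zero_of_fin _ (Polynomial.leadingCoeff_ne_zero.2 hq)
    have hmp := (measurePreserving_piFinSuccAbove μs 0).symm
    rw [← hmp.map_eq, MeasurableEquiv.measurableEmbedding _ |>.ae_map_iff]
    have hcons : ∀ z : ℂ × (Fin k → ℂ),
        (MeasurableEquiv.piFinSuccAbove (fun _ => ℂ) 0).symm z = Fin.cons z.1 z.2 := by
      intro z
      simp [MeasurableEquiv.piFinSuccAbove_symm_apply]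
      rfl
    have hmeas : MeasurableSet {z : ℂ × (Fin k → ℂ) | eval (Fin.cons z.1 z.2) p ≠ 0} :=
      (measurableSet_eq_fun ((continuous_eval p).comp (by fun_prop)).measurable
        measurable_const).compl
    simp only [hcons, eval_eq_eval_mv_eval'] at hmeas ⊢
    rw [Measure.ae_prod_iff_ae_ae hmeas, Measure.ae_ae_comm hmeas]
    filter_upwards [hlead] with y hy
    refine Polynomial.ae_eval_ne_zero _ fun h => hy ?_
    rw [Polynomial.leadingCoeff, ← Polynomial.coeff_map, h, Polynomial.coeff_zero]

theorem ae_eval_ne_zero {σ : Type*} [Fintype σ] (μs : σ → Measure ℂ) [∀ i, SigmaFinite (μs i)]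
    [∀ i, NullSingletonClass (μs i)] {p : MvPolynomial σ ℂ} (hp : p ≠ 0) :
    ∀ᵐ x ∂Measure.pi μs, eval x p ≠ 0 := by
  let e := Fintype.equivFin σ
  rw [← (measurePreserving_piCongrLeft μs e.symm).map_eq,
    (MeasurableEquiv.measurableEmbedding _).ae_map_iff]
  have hp' : rename e p ≠ 0 := (rename_injective e e.injective).ne_iff' (map_zero _) |>.2 hp
  have hx : ∀ x, MeasurableEquiv.piCongrLeft (fun _ => ℂ) e.symm x = x ∘ e := fun x => by
    ext i
    simp [MeasurableEquiv.piCongrLeft, Equiv.piCongrLeft_apply_eq_cast]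
  filter_upwards [ae_eval_ne_zero_of_fin _ hp'] with x hpx
  rwa [hx, ← eval_rename]

theorem ae_eval_uncurry_ne_zero {ι κ : Type*} [Fintype ι] [Fintype κ] (μ : ι → κ → Measure ℂ)
    [∀ i j, IsProbabilityMeasure (μ i j)] [∀ i j, NullSingletonClass (μ i j)]
    {p : MvPolynomial (ι × κ) ℂ} (hp : p ≠ 0) :
    ∀ᵐ h ∂Measure.pi (fun i => Measure.pi fun j => μ i j), eval (Function.uncurry h) p ≠ 0 := by
  have hcurry : (Measure.pi fun v : ι × κ => μ v.1 v.2).map (MeasurableEquiv.curry ι κ ℂ) =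
      Measure.pi fun i => Measure.pi fun j => μ i j := by
    simpa only [Measure.infinitePi_eq_pi] using Measure.infinitePi_map_curry μ
  rw [← hcurry, (MeasurableEquiv.measurableEmbedding _).ae_map_iff]
  exact ae_eval_ne_zero _ hp

end MvPolynomial

namespace Matrix

variable {m n K : Type*} [Fintype m] [DecidableEq m]

theorem isUnit_of_rank_eq_card [Field K] {A : Matrix m m K} (h : A.rank = Fintype.card m) :
    IsUnit A := by
  have hrange : LinearMap.range A.mulVecLin = ⊤ :=
    Submodule.eq_top_of_finrank_eq (by rwa [Module.finrank_fintype_fun_eq_card])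
  exact mulVec_surjective_iff_isUnit.1 (LinearMap.range_eq_top.1 hrange)

theorem det_conjTranspose_mul_self_ne_zero [Field K] [PartialOrder K] [StarRing K]
    [StarOrderedRing K] [Fintype n] {A : Matrix n m K} (h : A.rank = Fintype.card m) :
    (Aᴴ * A).det ≠ 0 :=
  ((isUnit_iff_isUnit_det _).1
    (isUnit_of_rank_eq_card (by rwa [rank_conjTranspose_mul_self]))).ne_zero

theorem card_le_rank_of_det_mul_ne_zero [CommRing K] [IsDomain K] [Fintype n] (L : Matrix m n K)
    (A : Matrix n m K) (h : (L * A).det ≠ 0) : Fintype.card m ≤ A.rank :=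
  (rank_of_det_ne_zero h).symm.trans_le (rank_mul_le_right L A)

theorem rank_add_le_rank_fromCols [CommSemiring K] [StrongRankCondition K] (A B : Matrix n m K) :
    (A + B).rank ≤ (fromCols A B).rank := by
  simpa only [fromCols_mul_fromRows, Matrix.mul_one] using
    rank_mul_le_left (fromCols A B) (fromRows (1 : Matrix m m K) 1)

end Matrix

namespace MvPolynomial

variable {ι n m R : Type*} [CommSemiring R]

noncomputable def diagonalXMul (i : ι) (V : Matrix n m R) : Matrix n m (MvPolynomial (ι × n) R) :=
  of fun a b => X (i, a) * C (V a b)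

@[simp]
theorem map_eval_uncurry_diagonalXMul [DecidableEq n] [Fintype n] (h : ι → n → R) (i : ι)
    (V : Matrix n m R) :
    (diagonalXMul i V).map (eval (Function.uncurry h)) = diagonal (h i) * V := by
  ext a b
  simp [diagonalXMul, diagonal_mul]

end MvPolynomial

open MvPolynomial in
theorem interference_rank_ge_of_signal_full_rank_general
    (n m : ℕ)
    (V₁ V₂ V₃ V₄ : Matrix (Fin n) (Fin m) ℂ)
    (μ : Measure ℂ) [IsProbabilityMeasure μ] (hac : μ ≪ volume)
    (hfull : ∀ᵐ d ∂(Measure.pi fun _ : Fin 2 => Measure.pi fun _ : Fin n => μ),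
      (Matrix.diagonal (d 0) * V₃ + Matrix.diagonal (d 1) * V₂).rank = m) :
    ∀ᵐ h ∂(Measure.pi fun _ : Fin 4 => Measure.pi fun _ : Fin n => μ),
      m ≤ (Matrix.fromCols
            (Matrix.diagonal (h 0) * V₂ + Matrix.diagonal (h 1) * V₁)
            (Matrix.diagonal (h 2) * V₃ + Matrix.diagonal (h 3) * V₄)).rank := by
  have := hac.nullSingletonClass
  obtain ⟨d, hd⟩ := hfull.exists
  set N := diagonal (d 0) * V₃ + diagonal (d 1) * V₂
  let P : Matrix (Fin m) (Fin m) (MvPolynomial (Fin 4 × Fin n) ℂ) := Nᴴ.map C *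
    (diagonalXMul (0 : Fin 4) V₂ + diagonalXMul 1 V₁ + (diagonalXMul 2 V₃ + diagonalXMul 3 V₄))
  have eval_det_P (h : Fin 4 → Fin n → ℂ) : eval (Function.uncurry h) P.det =
      (Nᴴ * (diagonal (h 0) * V₂ + diagonal (h 1) * V₁ +
        (diagonal (h 2) * V₃ + diagonal (h 3) * V₄))).det := by
    rw [RingHom.map_det, RingHom.mapMatrix_apply]
    refine congrArg det (Matrix.map_mul.trans ?_)
    simp [Matrix.map_add, Matrix.map_map, Function.comp_def]
  have hP : P.det ≠ 0 := by
    intro hP0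
    have hgram : (Nᴴ * N).det = eval (Function.uncurry ![d 1, 0, d 0, 0]) P.det := by
      rw [eval_det_P]
      congr 2
      simp [N, add_comm]
    rw [hP0, map_zero] at hgram
    open scoped ComplexOrder in
    exact det_conjTranspose_mul_self_ne_zero (by simpa using hd) hgram
  filter_upwards [ae_eval_uncurry_ne_zero (fun _ _ => μ) hP] with h hh
  rw [eval_det_P] at hh
  simpa using (card_le_rank_of_det_mul_ne_zero _ _ hh).trans (rank_add_le_rank_fromCols _ _)

/-- Lemma 2 (measure-theoretic content): if the desired-signal matrix
`diag(d) * V₃ + diag(d') * V₂` has full column rank `m` almost surely when the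
`2n` diagonal entries are i.i.d. draws from a distribution `μ` absolutely
continuous w.r.t. Lebesgue measure on `ℂ`, then the concatenated interference
matrix `[diag(h₁) V₂ + diag(h₂) V₁  |  diag(h₃) V₃ + diag(h₄) V₄]`, whose `4n`
diagonal entries are i.i.d. draws from `μ`, has rank at least `m` almost surely. -/
theorem interference_rank_ge_of_signal_full_rank
    (n m : ℕ) (hn : 0 < n) (hm : 0 < m)
    (V₁ V₂ V₃ V₄ : Matrix (Fin n) (Fin m) ℂ)
    (μ : Measure ℂ) [IsProbabilityMeasure μ] (hac : μ ≪ volume)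
    (hfull : ∀ᵐ d ∂(Measure.pi fun _ : Fin 2 => Measure.pi fun _ : Fin n => μ),
      (Matrix.diagonal (d 0) * V₃ + Matrix.diagonal (d 1) * V₂).rank = m) :
    ∀ᵐ h ∂(Measure.pi fun _ : Fin 4 => Measure.pi fun _ : Fin n => μ),
      m ≤ (Matrix.fromCols
            (Matrix.diagonal (h 0) * V₂ + Matrix.diagonal (h 1) * V₁)
            (Matrix.diagonal (h 2) * V₃ + Matrix.diagonal (h 3) * V₄)).rank :=
  interference_rank_ge_of_signal_full_rank_general n m V₁ V₂ V₃ V₄ μ hac hfull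
end

section
/- Let K be a positive integer divisible by 3 and consider the K-user Wyner linear interference network. Let S = {j ∈ {1,…,K} : j mod 3 ≠ 0} be the set of active transmitters and define σ(j) = j if j mod 3 = 1 and σ(j) = j+1 if j mod 3 = 2. Then: (a) σ maps S injectively into {1,…,K}; (b) every active transmitter j ∈ S is connected to its served receiver σ(j); (c) for any two distinct active transmitters j, j' ∈ S, transmitter j' is not connected to receiver σ(j); and (d) |S| = 2K/3. Hence each of the 2K/3 served receivers hears exactly one active transmitter, namely its own, so 2K/3 interference-free transmissions take place, i.e., 2/3 per user degrees of freedom are achieved by interference avoidance. -/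
lemma count_mod3 : ∀ n : ℕ, ((Finset.Icc 1 n).filter fun j => j % 3 ≠ 0).card = n - n / 3 := by
  intro n
  induction n with
  | zero => simp
  | succ n ih =>
    have : Finset.Icc 1 (n + 1) = insert (n + 1) (Finset.Icc 1 n) := by
      ext x; simp only [Finset.mem_Icc, Finset.mem_insert]; omega
    rw [this, Finset.filter_insert]
    by_cases h : (n + 1) % 3 ≠ 0
    · rw [if_pos h, Finset.card_insert_of_notMem (by simp)]
      omega
    · rw [if_neg h]
      omega

/-- Combinatorial validity of the interference-avoidance scheme achieving
`2/3` per user DoF in the `K`-user Wyner network (transmitter `j` connected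
to receiver `i` iff `i = j` or `i = j + 1`, indices in `{1,…,K}`), with
`3 ∣ K`: the set `S = {j : j mod 3 ≠ 0}` of active transmitters and the
service map `σ(j) = j` if `j mod 3 = 1`, `σ(j) = j + 1` if `j mod 3 = 2`,
satisfy: (a) `σ` maps `S` injectively into `{1,…,K}`; (b) every active
transmitter is connected to its served receiver; (c) no other active
transmitter is connected to that receiver; (d) `|S| = 2K/3`. Hence `2K/3`
interference-free transmissions take place. -/
theorem wyner_interference_avoidance_two_thirds
    (K : ℕ) (hK : 0 < K) (h3 : 3 ∣ K)
    (S : Finset ℕ) (hS : S = (Finset.Icc 1 K).filter fun j => j % 3 ≠ 0)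
    (σ : ℕ → ℕ) (hσ : ∀ j, σ j = if j % 3 = 1 then j else j + 1) :
    (Set.InjOn σ ↑S ∧ ∀ j ∈ S, σ j ∈ Finset.Icc 1 K) ∧
    (∀ j ∈ S, σ j = j ∨ σ j = j + 1) ∧
    (∀ j ∈ S, ∀ j' ∈ S, j ≠ j' → ¬(σ j = j' ∨ σ j = j' + 1)) ∧
    S.card = 2 * K / 3 := by
  have hmem : ∀ j, j ∈ S ↔ 1 ≤ j ∧ j ≤ K ∧ j % 3 ≠ 0 := by
    intro j; subst hS; simp [Finset.mem_filter, Finset.mem_Icc, and_assoc]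
  refine ⟨⟨?_, ?_⟩, ?_, ?_, ?_⟩
  · intro a ha b hb hab
    simp only [Finset.coe_sort_coe, Finset.mem_coe] at ha hb
    rw [hmem] at ha hb
    rw [hσ a, hσ b] at hab
    split_ifs at hab <;> omega
  · intro j hj
    rw [hmem] at hj
    rw [hσ j, Finset.mem_Icc]
    split_ifs with h <;> omega
  · intro j hj
    rw [hσ j]
    split_ifs <;> simp
  · intro j hj j' hj' hne
    rw [hmem] at hj hj'
    rw [hσ j]
    split_ifs <;> omega
  · rw [hS, count_mod3]
    omega
end
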